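/- On the two-dimensional discrete torus of side N, let ψ be a 2-chain, set φ := dψ, let r^φ(x,y) := max(φ(x,y), 0), and let M := max over pairs of anticlockwise-oriented faces f, f' of |ψ(f) − ψ(f')|. If s : E_N → [0,∞) is symmetric (s(x,y) = s(y,x)) and satisfies s(x,y) ≥ M/2 for every (x,y) ∈ E_N, then the weight r := r^φ + s belongs to R^e. -/
import Mathlib


namespace Torus

/-- Vertices of the two-dimensional discrete torus of side `N = n + 3`. -/
abbrev V (n : ℕ) := ZMod (n + 3) × ZMod (n + 3)

def e1 (n : ℕ) : V n := (1, 0)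
def e2 (n : ℕ) : V n := (0, 1)

/-- `(a, b)` is an oriented edge of the discrete torus. -/
def isEdge (n : ℕ) (a b : V n) : Prop :=
  b = a + e1 n ∨ b = a - e1 n ∨ b = a + e2 n ∨ b = a - e2 n

instance (n : ℕ) (a b : V n) : Decidable (isEdge n a b) := by
  unfold isEdge; infer_instance

/-- A discrete vector field: antisymmetric and supported on edges. -/
def IsVF (n : ℕ) (φ : V n → V n → ℝ) : Prop :=
  (∀ a b, φ a b = -φ b a) ∧ ∀ a b, ¬isEdge n a b → φ a b = 0

/-- A 2-chain, viewed as a function on oriented faces: the faces are indexed by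
`V n × Bool`, where `(x, true)` is the anticlockwise-oriented unit square with lower-left
corner `x` and `(x, false)` is the same square with the clockwise orientation. A 2-chain
takes opposite values on oppositely oriented faces. -/
def IsChain (n : ℕ) (ψ : V n → Bool → ℝ) : Prop :=
  ∀ x, ψ x false = -ψ x true

/-- The four oriented edges of the elementary 4-cycle of the anticlockwise face at `x`. -/
def aEdges (n : ℕ) (x : V n) : List (V n × V n) :=
  [(x, x + e1 n), (x + e1 n, x + e1 n + e2 n), (x + e1 n + e2 n, x + e2 n), (x + e2 n, x)]

/-- The four oriented edges of the elementary 4-cycle of the oriented face `(x, o)`. -/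
def faceEdges (n : ℕ) (x : V n) (o : Bool) : List (V n × V n) :=
  if o then aEdges n x else (aEdges n x).map fun p => (p.2, p.1)

/-- The boundary of a 2-chain: `dψ(a,b) = ∑_{f : (a,b) ∈ f} ψ(f)`. -/
def dChain (n : ℕ) (ψ : V n → Bool → ℝ) (a b : V n) : ℝ :=
  ∑ x : V n, ∑ o : Bool, if (a, b) ∈ faceEdges n x o then ψ x o else 0

/-- The discrete vector field associated to a weight. -/
def phiOf (n : ℕ) (r : V n → V n → ℝ) (a b : V n) : ℝ := r a b - r b a

/-- A weight: nonnegative and supported on edges. -/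
def IsWeight (n : ℕ) (r : V n → V n → ℝ) : Prop :=
  (∀ a b, 0 ≤ r a b) ∧ ∀ a b, ¬isEdge n a b → r a b = 0

/-- The divergence of a discrete vector field at a vertex. -/
def dvg (n : ℕ) (φ : V n → V n → ℝ) (x : V n) : ℝ :=
  ∑ y : V n, if isEdge n x y then φ x y else 0

/-- A cycle on the discrete torus: a closed path through `len + 2 ≥ 2` distinct vertices,
each step moving along an oriented edge. -/
structure TCycle (n : ℕ) where
  len : ℕ
  z : Fin (len + 2) → V n
  inj : Function.Injective z
  steps : ∀ i : Fin (len + 2), isEdge n (z i) (z (i + 1))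

/-- The displacement vector (in `ℤ²`) of a step along an edge. -/
def disp (n : ℕ) (a b : V n) : ℤ × ℤ :=
  if b = a + e1 n then (1, 0)
  else if b = a - e1 n then (-1, 0)
  else if b = a + e2 n then (0, 1)
  else if b = a - e2 n then (0, -1)
  else (0, 0)

/-- A cycle is homotopically trivial if its displacement vectors sum to zero. -/
def HomTrivial (n : ℕ) (C : TCycle n) : Prop :=
  (∑ i : Fin (C.len + 2), disp n (C.z i) (C.z (i + 1))) = 0

/-- The weight of a cycle: `1` on the oriented edges of the cycle, `0` elsewhere. -/
def rC (n : ℕ) (C : TCycle n) (a b : V n) : ℝ :=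
  if ∃ i : Fin (C.len + 2), a = C.z i ∧ b = C.z (i + 1) then 1 else 0

/-- `R*`: weights admitting a decomposition into homotopically trivial cycles with
nonnegative coefficients. -/
def MemRstar (n : ℕ) (r : V n → V n → ℝ) : Prop :=
  ∃ (l : ℕ) (C : Fin l → TCycle n) (ρ : Fin l → ℝ),
    (∀ i, 0 ≤ ρ i) ∧ (∀ i, HomTrivial n (C i)) ∧
    ∀ a b, r a b = ∑ i, ρ i * rC n (C i) a b

/-- Weight of the elementary 2-cycle `(x, y, x)` over an edge. -/
def r2 (n : ℕ) (x y : V n) (a b : V n) : ℝ :=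
  if (a = x ∧ b = y) ∨ (a = y ∧ b = x) then 1 else 0

/-- Weight of the elementary 4-cycle of the oriented face `(x, o)`. -/
def r4 (n : ℕ) (x : V n) (o : Bool) (a b : V n) : ℝ :=
  if (a, b) ∈ faceEdges n x o then 1 else 0

/-- `R^e`: weights admitting a decomposition into elementary cycles (the 2-cycles over
edges and the elementary 4-cycles of oriented faces) with nonnegative coefficients. -/
def MemRe (n : ℕ) (r : V n → V n → ℝ) : Prop :=
  ∃ (ρ₂ : V n → V n → ℝ) (ρ₄ : V n → Bool → ℝ),
    (∀ x y, 0 ≤ ρ₂ x y) ∧ (∀ x o, 0 ≤ ρ₄ x o) ∧ (∀ x y, ¬isEdge n x y → ρ₂ x y = 0) ∧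
    ∀ a b, r a b = (∑ x : V n, ∑ y : V n, ρ₂ x y * r2 n x y a b)
        + ∑ x : V n, ∑ o : Bool, ρ₄ x o * r4 n x o a b


section Aux

variable {n : ℕ}

private lemma one_nz : (1 : ZMod (n + 3)) ≠ 0 := by
  haveI : Fact (1 < n + 3) := ⟨by omega⟩
  exact one_ne_zero

private lemma oneone_nz : (1 : ZMod (n + 3)) + 1 ≠ 0 := by
  intro h
  have h2 : ((2 : ℕ) : ZMod (n + 3)) = 0 := by push_cast; linear_combination h
  rw [ZMod.natCast_eq_zero_iff] at h2
  have := Nat.le_of_dvd (by norm_num) h2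
  omega

private lemma e1_nz : e1 n ≠ 0 := by
  intro h
  have := congrArg Prod.fst h
  simp only [e1] at this
  exact one_nz this

private lemma e2_nz : e2 n ≠ 0 := by
  intro h
  have := congrArg Prod.snd h
  simp only [e2] at this
  exact one_nz this

private lemma two_e1 : e1 n + e1 n ≠ 0 := by
  intro h
  have := congrArg Prod.fst h
  simp only [e1, Prod.fst_add] at this
  exact oneone_nz this

private lemma two_e2 : e2 n + e2 n ≠ 0 := by
  intro h
  have := congrArg Prod.snd h
  simp only [e2, Prod.snd_add] at this
  exact oneone_nz this

private lemma e1_ne_e2 : e1 n ≠ e2 n := by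
  intro h
  have := congrArg Prod.fst h
  simp only [e1, e2] at this
  exact one_nz this

private lemma e12_nz : e1 n + e2 n ≠ 0 := by
  intro h
  have := congrArg Prod.fst h
  simp only [e1, e2, Prod.fst_add, add_zero] at this
  exact one_nz this

private lemma mem_aEdges_iff {x a b : V n} :
    (a, b) ∈ aEdges n x ↔
      (a = x ∧ b = x + e1 n) ∨ (a = x + e1 n ∧ b = x + e1 n + e2 n) ∨
      (a = x + e1 n + e2 n ∧ b = x + e2 n) ∨ (a = x + e2 n ∧ b = x) := by
  simp [aEdges, Prod.ext_iff]

private lemma memT1 {a b x : V n} (h : b = a + e1 n) : (a, b) ∈ aEdges n x ↔ x = a := by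
  subst h
  rw [mem_aEdges_iff]
  constructor
  · rintro (⟨h1, h2⟩ | ⟨h1, h2⟩ | ⟨h1, h2⟩ | ⟨h1, h2⟩)
    · exact h1.symm
    · exact absurd (by linear_combination h2 - h1) (e1_ne_e2 (n := n))
    · exact absurd (by linear_combination h2 - h1) (two_e1 (n := n))
    · exact absurd (by linear_combination h2 - h1) (e12_nz (n := n))
  · rintro rfl
    exact Or.inl ⟨rfl, rfl⟩

private lemma memT2 {a b x : V n} (h : b = a - e1 n) : (a, b) ∈ aEdges n x ↔ x = b - e2 n := by
  subst h
  rw [mem_aEdges_iff]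
  constructor
  · rintro (⟨h1, h2⟩ | ⟨h1, h2⟩ | ⟨h1, h2⟩ | ⟨h1, h2⟩)
    · exact absurd (by linear_combination h1 - h2) (two_e1 (n := n))
    · exact absurd (by linear_combination h1 - h2) (e12_nz (n := n))
    · exact (by linear_combination -h1 : x = a - e1 n - e2 n)
    · exact absurd (by linear_combination h1 - h2) (e1_ne_e2 (n := n))
  · rintro rfl
    exact Or.inr (Or.inr (Or.inl ⟨by ring, by ring⟩))

private lemma memT3 {a b x : V n} (h : b = a + e2 n) : (a, b) ∈ aEdges n x ↔ x = a - e1 n := by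
  subst h
  rw [mem_aEdges_iff]
  constructor
  · rintro (⟨h1, h2⟩ | ⟨h1, h2⟩ | ⟨h1, h2⟩ | ⟨h1, h2⟩)
    · exact absurd (by linear_combination h1 - h2) (e1_ne_e2 (n := n))
    · exact (by linear_combination -h1 : x = a - e1 n)
    · exact absurd (by linear_combination h2 - h1) (e12_nz (n := n))
    · exact absurd (by linear_combination h2 - h1) (two_e2 (n := n))
  · rintro rfl
    exact Or.inr (Or.inl ⟨by ring, by ring⟩)

private lemma memT4 {a b x : V n} (h : b = a - e2 n) : (a, b) ∈ aEdges n x ↔ x = b := by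
  subst h
  rw [mem_aEdges_iff]
  constructor
  · rintro (⟨h1, h2⟩ | ⟨h1, h2⟩ | ⟨h1, h2⟩ | ⟨h1, h2⟩)
    · exact absurd (by linear_combination h1 - h2) (e12_nz (n := n))
    · exact absurd (by linear_combination h1 - h2) (two_e2 (n := n))
    · exact absurd (by linear_combination h2 - h1) (e1_ne_e2 (n := n))
    · exact (by linear_combination -h2 : x = a - e2 n)
  · rintro rfl
    exact Or.inr (Or.inr (Or.inr ⟨by ring, rfl⟩))

private lemma faceEdges_true (x : V n) : faceEdges n x true = aEdges n x := rfl

private lemma mem_faceEdges_false {a b x : V n} :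
    (a, b) ∈ faceEdges n x false ↔ (b, a) ∈ aEdges n x := by
  rw [show faceEdges n x false = (aEdges n x).map fun p => (p.2, p.1) from rfl, List.mem_map]
  constructor
  · rintro ⟨⟨p1, p2⟩, hp, h⟩
    injection h with h1 h2
    subst h1; subst h2
    exact hp
  · intro h
    exact ⟨(b, a), h, rfl⟩

private lemma isEdge_symm {a b : V n} (h : isEdge n a b) : isEdge n b a := by
  rcases h with h | h | h | h
  · exact Or.inr (Or.inl (by rw [h]; ring))
  · exact Or.inl (by rw [h]; ring)
  · exact Or.inr (Or.inr (Or.inr (by rw [h]; ring)))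
  · exact Or.inr (Or.inr (Or.inl (by rw [h]; ring)))

private lemma isEdge_of_mem_aEdges {a b x : V n} (h : (a, b) ∈ aEdges n x) : isEdge n a b := by
  rw [mem_aEdges_iff] at h
  rcases h with ⟨rfl, rfl⟩ | ⟨rfl, rfl⟩ | ⟨rfl, rfl⟩ | ⟨rfl, rfl⟩
  · exact Or.inl rfl
  · exact Or.inr (Or.inr (Or.inl (by ring)))
  · exact Or.inr (Or.inl (by ring))
  · exact Or.inr (Or.inr (Or.inr (by ring)))

private lemma isEdge_of_mem_faceEdges {a b x : V n} {o : Bool}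
    (h : (a, b) ∈ faceEdges n x o) : isEdge n a b := by
  cases o
  · exact isEdge_symm (isEdge_of_mem_aEdges (mem_faceEdges_false.1 h))
  · exact isEdge_of_mem_aEdges (by rwa [faceEdges_true] at h)

private lemma not_isEdge_self (a : V n) : ¬ isEdge n a a := by
  rintro (h | h | h | h)
  · exact e1_nz (n := n) (by linear_combination -h)
  · exact e1_nz (n := n) (by linear_combination h)
  · exact e2_nz (n := n) (by linear_combination -h)
  · exact e2_nz (n := n) (by linear_combination h)

private lemma isEdge_ne {a b : V n} (h : isEdge n a b) : a ≠ b := by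
  rintro rfl; exact not_isEdge_self a h

private lemma dChain_eval (g : V n → Bool → ℝ) {a b A B : V n}
    (h1 : ∀ x : V n, ((a, b) ∈ faceEdges n x true ↔ x = A))
    (h2 : ∀ x : V n, ((a, b) ∈ faceEdges n x false ↔ x = B)) :
    dChain n g a b = g A true + g B false := by
  rw [dChain]
  have hx : ∀ x : V n, (∑ o : Bool, if (a, b) ∈ faceEdges n x o then g x o else 0)
      = (if x = A then g x true else 0) + (if x = B then g x false else 0) := by
    intro x
    rw [Fintype.sum_bool, if_congr (h1 x) rfl rfl, if_congr (h2 x) rfl rfl]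
  rw [Finset.sum_congr rfl fun x _ => hx x, Finset.sum_add_distrib,
    Finset.sum_ite_eq' Finset.univ A (fun x => g x true),
    Finset.sum_ite_eq' Finset.univ B (fun x => g x false)]
  simp

private lemma key_edge {a b : V n} (h : isEdge n a b) :
    ∃ A B : V n, ∀ g : V n → Bool → ℝ,
      dChain n g a b = g A true + g B false ∧ dChain n g b a = g B true + g A false := by
  rcases h with h | h | h | h
  · refine ⟨a, a - e2 n, fun g => ⟨?_, ?_⟩⟩
    · exact dChain_eval g (fun x => by rw [faceEdges_true]; exact memT1 h)
        (fun x => by rw [mem_faceEdges_false]; exact memT2 (by rw [h]; ring))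
    · exact dChain_eval g (fun x => by rw [faceEdges_true]; exact memT2 (by rw [h]; ring))
        (fun x => by rw [mem_faceEdges_false]; exact memT1 h)
  · refine ⟨b - e2 n, b, fun g => ⟨?_, ?_⟩⟩
    · exact dChain_eval g (fun x => by rw [faceEdges_true]; exact memT2 h)
        (fun x => by rw [mem_faceEdges_false]; exact memT1 (by rw [h]; ring))
    · exact dChain_eval g (fun x => by rw [faceEdges_true]; exact memT1 (by rw [h]; ring))
        (fun x => by rw [mem_faceEdges_false]; exact memT2 h)
  · refine ⟨a - e1 n, a, fun g => ⟨?_, ?_⟩⟩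
    · exact dChain_eval g (fun x => by rw [faceEdges_true]; exact memT3 h)
        (fun x => by rw [mem_faceEdges_false]; exact memT4 (by rw [h]; ring))
    · exact dChain_eval g (fun x => by rw [faceEdges_true]; exact memT4 (by rw [h]; ring))
        (fun x => by rw [mem_faceEdges_false]; exact memT3 h)
  · refine ⟨b, b - e1 n, fun g => ⟨?_, ?_⟩⟩
    · exact dChain_eval g (fun x => by rw [faceEdges_true]; exact memT4 h)
        (fun x => by rw [mem_faceEdges_false]; exact memT3 (by rw [h]; ring))
    · exact dChain_eval g (fun x => by rw [faceEdges_true]; exact memT3 (by rw [h]; ring))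
        (fun x => by rw [mem_faceEdges_false]; exact memT4 h)

private lemma dChain_not_edge (g : V n → Bool → ℝ) {a b : V n} (h : ¬ isEdge n a b) :
    dChain n g a b = 0 := by
  rw [dChain]
  refine Finset.sum_eq_zero fun x _ => Finset.sum_eq_zero fun o _ => ?_
  rw [if_neg fun hm => h (isEdge_of_mem_faceEdges hm)]

private lemma max_zero_eq (t : ℝ) : max t 0 = (t + |t|) / 2 := by
  rcases le_total t 0 with h | h
  · rw [max_eq_right h, abs_of_nonpos h]; ring
  · rw [max_eq_left h, abs_of_nonneg h]; ring

/-- The 4-cycle coefficients. -/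
private noncomputable def rho4 (n : ℕ) (ψ : V n → Bool → ℝ) (c : ℝ) : V n → Bool → ℝ
  | x, true => max (ψ x true - c) 0
  | x, false => max (-(ψ x true - c)) 0

/-- The symmetric edge excess. -/
private noncomputable def Efun (n : ℕ) (ψ : V n → Bool → ℝ) (s : V n → V n → ℝ) (c : ℝ) (a b : V n) : ℝ :=
  max (dChain n ψ a b) 0 + s a b - dChain n (rho4 n ψ c) a b

/-- The 2-cycle coefficients. -/
private noncomputable def rho2 (n : ℕ) (ψ : V n → Bool → ℝ) (s : V n → V n → ℝ) (c : ℝ) (a b : V n) : ℝ :=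
  if isEdge n a b then Efun n ψ s c a b / 2 else 0

private lemma E_symm_nonneg {n : ℕ} {ψ : V n → Bool → ℝ} (hψ : IsChain n ψ)
    {s : V n → V n → ℝ} {c : ℝ} (hs : ∀ a b, s a b = s b a)
    (hbound : ∀ x a b : V n, isEdge n a b → |ψ x true - c| ≤ s a b) :
    ∀ a b : V n, isEdge n a b →
      Efun n ψ s c a b = Efun n ψ s c b a ∧ 0 ≤ Efun n ψ s c a b := by
  intro a b h
  obtain ⟨A, B, hg⟩ := key_edge h
  obtain ⟨d1, d2⟩ := hg ψ
  obtain ⟨r1, r2⟩ := hg (rho4 n ψ c)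
  rw [hψ B] at d1
  rw [hψ A] at d2
  simp only [rho4] at r1 r2
  have hEab : Efun n ψ s c a b
      = s a b + (|(ψ A true - c) - (ψ B true - c)| - |ψ A true - c| - |ψ B true - c|) / 2 := by
    rw [Efun, d1, r1, show ψ A true + -ψ B true = (ψ A true - c) - (ψ B true - c) by ring,
      max_zero_eq, max_zero_eq, max_zero_eq, abs_neg]
    ring
  have hEba : Efun n ψ s c b a
      = s b a + (|(ψ B true - c) - (ψ A true - c)| - |ψ B true - c| - |ψ A true - c|) / 2 := by
    rw [Efun, d2, r2, show ψ B true + -ψ A true = (ψ B true - c) - (ψ A true - c) by ring,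
      max_zero_eq, max_zero_eq, max_zero_eq, abs_neg]
    ring
  constructor
  · rw [hEab, hEba, hs a b, abs_sub_comm]
    ring
  · rw [hEab]
    have h1 : |ψ A true - c| ≤ s a b := hbound A a b h
    have h2 : |ψ B true - c| ≤ s a b := hbound B a b h
    have h3 : |ψ B true - c| - |ψ A true - c| ≤ |(ψ A true - c) - (ψ B true - c)| := by
      exact le_trans (abs_sub_abs_le_abs_sub _ _) (le_of_eq (abs_sub_comm _ _))
    linarith

end Aux

/-- If `φ = dψ` for a 2-chain `ψ`, `r^φ = max(φ, 0)`, and `s` is a symmetric weight with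
`s(x,y) ≥ M/2` on all edges, where `M` is the maximal variation of `ψ` over pairs of
anticlockwise faces, then `r = r^φ + s` belongs to `R^e`. -/
theorem mem_Re_of_large_symmetric_part (n : ℕ) (ψ : V n → Bool → ℝ) (hψ : IsChain n ψ)
    (s : V n → V n → ℝ)
    (hsymm : ∀ a b, s a b = s b a) (hpos : ∀ a b, 0 ≤ s a b)
    (hsupp : ∀ a b, ¬isEdge n a b → s a b = 0)
    (hM : ∀ a b, isEdge n a b →
      (Finset.univ.sup' ⟨((0, 0), (0, 0)), Finset.mem_univ _⟩
          fun p : V n × V n => |ψ p.1 true - ψ p.2 true|) / 2 ≤ s a b) :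
    MemRe n fun a b => max (dChain n ψ a b) 0 + s a b := by
  classical
  have hne : (Finset.univ : Finset (V n)).Nonempty := Finset.univ_nonempty
  set c : ℝ := ((Finset.univ.sup' hne fun x : V n => ψ x true)
      + (Finset.univ.inf' hne fun x : V n => ψ x true)) / 2 with hc
  have hbound : ∀ x a b : V n, isEdge n a b → |ψ x true - c| ≤ s a b := by
    intro x a b hab
    refine le_trans ?_ (hM a b hab)
    obtain ⟨p, -, hp⟩ := Finset.exists_mem_eq_sup' hne (fun x : V n => ψ x true)
    obtain ⟨q, -, hq⟩ := Finset.exists_mem_eq_inf' hne (fun x : V n => ψ x true)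
    have hdle : (Finset.univ.sup' hne fun x : V n => ψ x true)
        - (Finset.univ.inf' hne fun x : V n => ψ x true)
        ≤ (Finset.univ.sup' ⟨((0, 0), (0, 0)), Finset.mem_univ _⟩
            fun p : V n × V n => |ψ p.1 true - ψ p.2 true|) := by
      rw [hp, hq]
      exact le_trans (le_abs_self _)
        (Finset.le_sup' (fun p : V n × V n => |ψ p.1 true - ψ p.2 true|)
          (Finset.mem_univ (p, q)))
    have h1 : ψ x true ≤ Finset.univ.sup' hne fun x : V n => ψ x true :=
      Finset.le_sup' (fun x : V n => ψ x true) (Finset.mem_univ x)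
    have h2 : (Finset.univ.inf' hne fun x : V n => ψ x true) ≤ ψ x true :=
      Finset.inf'_le (fun x : V n => ψ x true) (Finset.mem_univ x)
    rw [abs_le]
    constructor <;> rw [hc] <;> linarith
  have hEsn := E_symm_nonneg hψ hsymm hbound
  refine ⟨rho2 n ψ s c, rho4 n ψ c, ?_, ?_, ?_, ?_⟩
  · intro x y
    rw [rho2]
    split_ifs with h
    · exact div_nonneg (hEsn x y h).2 (by norm_num)
    · exact le_refl 0
  · intro x o
    cases o <;> simp only [rho4] <;> exact le_max_right _ _
  · intro x y h
    rw [rho2, if_neg h]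
  · intro a b
    have h4 : (∑ x : V n, ∑ o : Bool, rho4 n ψ c x o * r4 n x o a b)
        = dChain n (rho4 n ψ c) a b := by
      rw [dChain]
      refine Finset.sum_congr rfl fun x _ => Finset.sum_congr rfl fun o _ => ?_
      rw [r4]
      split_ifs <;> simp
    rw [h4]
    show max (dChain n ψ a b) 0 + s a b = _
    by_cases hab : isEdge n a b
    · have hne' : a ≠ b := isEdge_ne hab
      have hba : isEdge n b a := isEdge_symm hab
      have hterm : ∀ x y : V n, rho2 n ψ s c x y * r2 n x y a b
          = (if y = b ∧ x = a then rho2 n ψ s c a b else 0)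
            + (if y = a ∧ x = b then rho2 n ψ s c b a else 0) := by
        intro x y
        rw [r2]
        by_cases h1 : y = b ∧ x = a
        · obtain ⟨rfl, rfl⟩ := h1
          rw [if_pos (Or.inl ⟨rfl, rfl⟩), if_pos ⟨rfl, rfl⟩,
            if_neg (fun h' : y = x ∧ x = y => hne' h'.1.symm)]
          ring
        · by_cases h2 : y = a ∧ x = b
          · obtain ⟨rfl, rfl⟩ := h2
            rw [if_pos (Or.inr ⟨rfl, rfl⟩), if_neg h1, if_pos ⟨rfl, rfl⟩]
            ring
          · have hno : ¬((a = x ∧ b = y) ∨ (a = y ∧ b = x)) := by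
              rintro (⟨rfl, rfl⟩ | ⟨rfl, rfl⟩)
              · exact h1 ⟨rfl, rfl⟩
              · exact h2 ⟨rfl, rfl⟩
            rw [if_neg hno, if_neg h1, if_neg h2, mul_zero, add_zero]
      have h2s : (∑ x : V n, ∑ y : V n, rho2 n ψ s c x y * r2 n x y a b)
          = rho2 n ψ s c a b + rho2 n ψ s c b a := by
        simp only [hterm, ite_and, Finset.sum_add_distrib, Finset.sum_ite_eq',
          Finset.mem_univ, if_true]
      rw [h2s]
      have hsym := (hEsn a b hab).1
      simp only [rho2, if_pos hab, if_pos hba]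
      rw [← hsym, Efun]
      ring
    · have hba : ¬ isEdge n b a := fun h => hab (isEdge_symm h)
      have lhs0 : dChain n ψ a b = 0 := dChain_not_edge ψ hab
      have r40 : dChain n (rho4 n ψ c) a b = 0 := dChain_not_edge _ hab
      have h2s : (∑ x : V n, ∑ y : V n, rho2 n ψ s c x y * r2 n x y a b) = 0 := by
        refine Finset.sum_eq_zero fun x _ => Finset.sum_eq_zero fun y _ => ?_
        rw [r2]
        split_ifs with h
        · rcases h with ⟨rfl, rfl⟩ | ⟨rfl, rfl⟩
          · rw [rho2, if_neg hab, zero_mul]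
          · rw [rho2, if_neg hba, zero_mul]
        · exact mul_zero _
      rw [h2s, lhs0, r40, hsupp a b hab]
      norm_num

end Torus
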